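/- On the domain {(x,y₁,y₂) ∈ ℝ³ : y₂ < y₁ < x} define F(x,y₁,y₂) = (y₁ + y₂ − 2x) / ((x−y₁)^{1/2}(x−y₂)^{1/2}(y₁−y₂)^{5/4}) and Z(x,y₁,y₂) = (y₁−y₂)^{3/4} / ((x−y₁)^{1/2}(x−y₂)^{1/2}). Then: (i) (∂/∂x + ∂/∂y₁ + ∂/∂y₂) F = 0; (ii) (x ∂/∂x + y₁ ∂/∂y₁ + y₂ ∂/∂y₂ + 5/4) F = 0; and (iii) (x² ∂/∂x + y₁² ∂/∂y₁ + y₂² ∂/∂y₂ + (5/4)(y₁ + y₂)) F = (1/2) Z. That is, F is a highest weight vector of weight 0 (L₁F = 0, L₀F = 0) whose grade-one singular vector L₋₁F = (1/2)Z is nonzero. -/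

import Mathlib

/-!
`F` is a numerator `N = y₁ + y₂ - 2x` over `D = (x - y₁)^{1/2} (x - y₂)^{1/2} (y₁ - y₂)^{5/4}`,
so each partial derivative of `F` is `(∂N - N · ∂ log D) / D`, with `∂ log D` a sum of simple
fractions. Since also `Z = (y₁ - y₂)² / D`, all three identities become rational identities in
`x, y₁, y₂` once the common factor `1 / D` is cleared.
-/

/-- The highest weight vector `F` of weight `0` for SLE₆(ρ₁=-3, ρ₂=-3). -/
noncomputable def F18 (x y₁ y₂ : ℝ) : ℝ :=
  (y₁ + y₂ - 2 * x)
    / ((x - y₁) ^ ((1 : ℝ) / 2) * (x - y₂) ^ ((1 : ℝ) / 2) * (y₁ - y₂) ^ ((5 : ℝ) / 4))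

/-- The SLE₆(ρ₁=-3, ρ₂=-3) partition function. -/
noncomputable def Z18 (x y₁ y₂ : ℝ) : ℝ :=
  (y₁ - y₂) ^ ((3 : ℝ) / 4) / ((x - y₁) ^ ((1 : ℝ) / 2) * (x - y₂) ^ ((1 : ℝ) / 2))

theorem HasDerivAt.rpow_const_of_pos {u : ℝ → ℝ} {u' α t : ℝ} (hu : HasDerivAt u u' t)
    (hpos : 0 < u t) : HasDerivAt (fun s => u s ^ α) (α * (u' / u t) * u t ^ α) t := by
  convert hu.rpow_const (p := α) (Or.inl hpos.ne') using 1
  rw [Real.rpow_sub_one hpos.ne']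
  ring

theorem HasDerivAt.div_rpow_mul_rpow_mul_rpow {n u v w : ℝ → ℝ} {n' u' v' w' α β γ t : ℝ}
    (hn : HasDerivAt n n' t) (hu : HasDerivAt u u' t) (hv : HasDerivAt v v' t)
    (hw : HasDerivAt w w' t) (hu₀ : 0 < u t) (hv₀ : 0 < v t) (hw₀ : 0 < w t) :
    HasDerivAt (fun s => n s / (u s ^ α * v s ^ β * w s ^ γ))
      ((n' - n t * (α * (u' / u t) + β * (v' / v t) + γ * (w' / w t)))
        / (u t ^ α * v t ^ β * w t ^ γ)) t := by
  have hD : u t ^ α * v t ^ β * w t ^ γ ≠ 0 := by positivity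
  refine (hn.div (((hu.rpow_const_of_pos hu₀).mul (hv.rpow_const_of_pos hv₀)).mul
    (hw.rpow_const_of_pos hw₀)) hD).congr_deriv ?_
  simp only [Pi.mul_apply]
  field_simp

section
variable {x y₁ y₂ : ℝ}

theorem hasDerivAt_F18_x (h₂₁ : y₂ < y₁) (h₁ : y₁ < x) :
    HasDerivAt (fun x' => F18 x' y₁ y₂)
      ((-2 - (y₁ + y₂ - 2 * x) * ((1 / 2) / (x - y₁) + (1 / 2) / (x - y₂)))
        / ((x - y₁) ^ ((1 : ℝ) / 2) * (x - y₂) ^ ((1 : ℝ) / 2) * (y₁ - y₂) ^ ((5 : ℝ) / 4))) x := by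
  refine (HasDerivAt.div_rpow_mul_rpow_mul_rpow
    (((hasDerivAt_id' x).const_mul 2).const_sub (y₁ + y₂)) ((hasDerivAt_id' x).sub_const y₁)
    ((hasDerivAt_id' x).sub_const y₂) (hasDerivAt_const x (y₁ - y₂))
    (sub_pos.2 h₁) (sub_pos.2 (h₂₁.trans h₁)) (sub_pos.2 h₂₁)).congr_deriv ?_
  ring

theorem hasDerivAt_F18_y₁ (h₂₁ : y₂ < y₁) (h₁ : y₁ < x) :
    HasDerivAt (fun y₁' => F18 x y₁' y₂)
      ((1 - (y₁ + y₂ - 2 * x) * (-(1 / 2) / (x - y₁) + (5 / 4) / (y₁ - y₂)))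
        / ((x - y₁) ^ ((1 : ℝ) / 2) * (x - y₂) ^ ((1 : ℝ) / 2) * (y₁ - y₂) ^ ((5 : ℝ) / 4))) y₁ := by
  refine (HasDerivAt.div_rpow_mul_rpow_mul_rpow
    (((hasDerivAt_id' y₁).add_const y₂).sub_const (2 * x)) ((hasDerivAt_id' y₁).const_sub x)
    (hasDerivAt_const y₁ (x - y₂)) ((hasDerivAt_id' y₁).sub_const y₂)
    (sub_pos.2 h₁) (sub_pos.2 (h₂₁.trans h₁)) (sub_pos.2 h₂₁)).congr_deriv ?_
  ring

theorem hasDerivAt_F18_y₂ (h₂₁ : y₂ < y₁) (h₁ : y₁ < x) :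
    HasDerivAt (fun y₂' => F18 x y₁ y₂')
      ((1 - (y₁ + y₂ - 2 * x) * (-(1 / 2) / (x - y₂) - (5 / 4) / (y₁ - y₂)))
        / ((x - y₁) ^ ((1 : ℝ) / 2) * (x - y₂) ^ ((1 : ℝ) / 2) * (y₁ - y₂) ^ ((5 : ℝ) / 4))) y₂ := by
  refine (HasDerivAt.div_rpow_mul_rpow_mul_rpow
    (((hasDerivAt_id' y₂).const_add y₁).sub_const (2 * x)) (hasDerivAt_const y₂ (x - y₁))
    ((hasDerivAt_id' y₂).const_sub x) ((hasDerivAt_id' y₂).const_sub y₁)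
    (sub_pos.2 h₁) (sub_pos.2 (h₂₁.trans h₁)) (sub_pos.2 h₂₁)).congr_deriv ?_
  ring

theorem Z18_eq (h₂₁ : y₂ < y₁) :
    Z18 x y₁ y₂ = (y₁ - y₂) ^ 2
      / ((x - y₁) ^ ((1 : ℝ) / 2) * (x - y₂) ^ ((1 : ℝ) / 2) * (y₁ - y₂) ^ ((5 : ℝ) / 4)) := by
  have hc : 0 < y₁ - y₂ := sub_pos.2 h₂₁
  have : (y₁ - y₂) ^ 2 = (y₁ - y₂) ^ ((3 : ℝ) / 4) * (y₁ - y₂) ^ ((5 : ℝ) / 4) := by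
    rw [← Real.rpow_add hc]
    norm_num
  rw [Z18, this, mul_div_mul_right _ _ (by positivity)]

end

/-- `L₁ F = 0`, `L₀ F = 0` and `L₋₁ F = (1/2) Z`: `F` is a highest
weight vector of weight `0` with nonzero grade-one singular vector. -/
theorem stmt_18 :
    ∀ x y₁ y₂ : ℝ, y₂ < y₁ → y₁ < x →
      (deriv (fun x' => F18 x' y₁ y₂) x + deriv (fun y₁' => F18 x y₁' y₂) y₁
          + deriv (fun y₂' => F18 x y₁ y₂') y₂ = 0)
      ∧ (x * deriv (fun x' => F18 x' y₁ y₂) x + y₁ * deriv (fun y₁' => F18 x y₁' y₂) y₁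
          + y₂ * deriv (fun y₂' => F18 x y₁ y₂') y₂ + 5 / 4 * F18 x y₁ y₂ = 0)
      ∧ (x ^ 2 * deriv (fun x' => F18 x' y₁ y₂) x
          + y₁ ^ 2 * deriv (fun y₁' => F18 x y₁' y₂) y₁
          + y₂ ^ 2 * deriv (fun y₂' => F18 x y₁ y₂') y₂
          + 5 / 4 * (y₁ + y₂) * F18 x y₁ y₂
          = 1 / 2 * Z18 x y₁ y₂) := by
  intro x y₁ y₂ h₂₁ h₁
  have ha : x - y₁ ≠ 0 := (sub_pos.2 h₁).ne'
  have hb : x - y₂ ≠ 0 := (sub_pos.2 (h₂₁.trans h₁)).ne'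
  have hc : y₁ - y₂ ≠ 0 := (sub_pos.2 h₂₁).ne'
  rw [(hasDerivAt_F18_x h₂₁ h₁).deriv, (hasDerivAt_F18_y₁ h₂₁ h₁).deriv,
    (hasDerivAt_F18_y₂ h₂₁ h₁).deriv, Z18_eq h₂₁, F18]
  refine ⟨?_, ?_, ?_⟩ <;> field_simp <;> ring
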